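/- arXiv:2605.15285 — 2 statements merged into one kernel-verified Lean document; each statement's English description precedes it below -/
import Mathlib

section
/- Let X and Y be real Banach spaces with the approximation property and let k ∈ ℕ. Then for every k-times continuously Fréchet differentiable map F : X → Y, all compact sets K, K' ⊆ X, and every ε > 0, there exist finite-rank continuous linear operators S : X → X and T : Y → Y such that for every 0 ≤ i ≤ k: sup_{x ∈ K, h^1, …, h^i ∈ K'} ‖D^i F(x)(h^1, …, h^i) − T(D^i F(S x)(S h^1, …, S h^i))‖_Y < ε. (The map T ∘ F ∘ S is k-times continuously Fréchet differentiable with i-th derivative at x given by (h^1, …, h^i) ↦ T(D^i F(Sx)(Sh^1, …, Sh^i)), so this says cylindrical approximations of F approximate F and all its derivatives up to order k uniformly on compacts.) -/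
open MeasureTheory
open scoped Topology ENNReal NNReal

/-- A real Banach space `Z` has the approximation property: every compact set can be
uniformly approximated to arbitrary precision by a finite-rank continuous linear operator. -/
def HasApproxProperty (Z : Type*) [NormedAddCommGroup Z] [NormedSpace ℝ Z] : Prop :=
  ∀ K : Set Z, IsCompact K → ∀ ε : ℝ, 0 < ε →
    ∃ S : Z →L[ℝ] Z, FiniteDimensional ℝ (LinearMap.range (S : Z →ₗ[ℝ] Z)) ∧ ∀ z ∈ K, ‖z - S z‖ < ε

/-!
Write `Φᵢ(x, h) = DⁱF(x) h`, a continuous function of `(x, h)`. Being uniformly continuous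
near the compact set `K × K'ⁱ`, it barely changes when `(x, h)` is replaced by `(S x, S ∘ h)`
for a finite-rank `S` that moves `K ∪ K'` by less than some `δ`. Having fixed `S`, the values
`Φᵢ(S x, S ∘ h)` for `i ≤ k` range over a compact subset of `Y`, on which a finite-rank `T` is
close to the identity.
-/

open Filter Set

theorem IsCompact.eventually_forall_dist_lt {α β : Type*} [PseudoMetricSpace α]
    [PseudoMetricSpace β] {s : Set α} (hs : IsCompact s) {f : α → β} (hf : Continuous f)
    {η : ℝ} (hη : 0 < η) :
    ∀ᶠ δ in 𝓝[>] (0 : ℝ), ∀ x ∈ s, ∀ y, dist x y < δ → dist (f x) (f y) < η := by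
  obtain ⟨δ₀, hδ₀, hf⟩ := Metric.mem_uniformity_dist.mp <|
    hs.uniformContinuousAt_of_continuousAt f (fun x _ => hf.continuousAt)
      (Metric.dist_mem_uniformity hη)
  filter_upwards [nhdsWithin_le_nhds (Iio_mem_nhds hδ₀)] with δ hδ x hx y hxy
  exact hf (hxy.trans hδ) hx

section CylindricalApproximation

variable {X Y : Type*} [NormedAddCommGroup X] [NormedSpace ℝ X]
  [NormedAddCommGroup Y] [NormedSpace ℝ Y] {k : ℕ} {F : X → Y}

theorem ContDiff.continuous_uncurry_iteratedFDeriv (hF : ContDiff ℝ k F) {i : ℕ} (hi : i ≤ k) :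
    Continuous fun p : X × (Fin i → X) => iteratedFDeriv ℝ i F p.1 p.2 :=
  continuous_eval.comp <|
    ((hF.continuous_iteratedFDeriv (by exact_mod_cast hi)).comp continuous_fst).prodMk
      continuous_snd

theorem HasApproxProperty.exists_iteratedFDeriv_comp_near (hX : HasApproxProperty X)
    (hF : ContDiff ℝ k F) {K K' : Set X} (hK : IsCompact K) (hK' : IsCompact K')
    {ε : ℝ} (hε : 0 < ε) :
    ∃ S : X →L[ℝ] X, FiniteDimensional ℝ (LinearMap.range (S : X →ₗ[ℝ] X)) ∧
      ∀ i ≤ k, ∀ x ∈ K, ∀ h : Fin i → X, (∀ j, h j ∈ K') →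
        ‖iteratedFDeriv ℝ i F x h - iteratedFDeriv ℝ i F (S x) (fun j => S (h j))‖ < ε := by
  have hunif : ∀ᶠ δ in 𝓝[>] (0 : ℝ), ∀ i ∈ Iic k, ∀ p ∈ K ×ˢ univ.pi (fun _ : Fin i => K'),
      ∀ q, dist p q < δ →
        dist (iteratedFDeriv ℝ i F p.1 p.2) (iteratedFDeriv ℝ i F q.1 q.2) < ε :=
    (eventually_all_finite (finite_Iic k)).mpr fun i hi =>
      (hK.prod (isCompact_univ_pi fun _ => hK')).eventually_forall_dist_lt
        (hF.continuous_uncurry_iteratedFDeriv hi) hε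
  obtain ⟨δ, hδ, hδ₀⟩ := (hunif.and self_mem_nhdsWithin).exists
  obtain ⟨S, hSfin, hS⟩ := hX (K ∪ K') (hK.union hK') δ hδ₀
  refine ⟨S, hSfin, fun i hi x hx h hh => ?_⟩
  rw [← dist_eq_norm]
  refine hδ i hi (x, h) ⟨hx, fun j _ => hh j⟩ (S x, fun j => S (h j)) ?_
  rw [Prod.dist_eq, max_lt_iff, dist_pi_lt_iff hδ₀]
  simp only [dist_eq_norm]
  exact ⟨hS x (.inl hx), fun j => hS (h j) (.inr (hh j))⟩

theorem isCompact_iUnion_iteratedFDeriv_comp (hF : ContDiff ℝ k F) (S : X →L[ℝ] X)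
    {K K' : Set X} (hK : IsCompact K) (hK' : IsCompact K') :
    IsCompact (⋃ i ∈ Iic k, (fun p : X × (Fin i → X) =>
      iteratedFDeriv ℝ i F (S p.1) (fun j => S (p.2 j))) '' (K ×ˢ univ.pi fun _ => K')) :=
  (finite_Iic k).isCompact_biUnion fun _ hi =>
    (hK.prod (isCompact_univ_pi fun _ => hK')).image <|
      (hF.continuous_uncurry_iteratedFDeriv hi).comp <|
        (S.continuous.comp continuous_fst).prodMk <|
          continuous_pi fun j => S.continuous.comp ((continuous_apply j).comp continuous_snd)

end CylindricalApproximation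

theorem stmt_3_general {X Y : Type*} [NormedAddCommGroup X] [NormedSpace ℝ X]
    [NormedAddCommGroup Y] [NormedSpace ℝ Y]
    (hX : HasApproxProperty X) (hY : HasApproxProperty Y) (k : ℕ)
    (F : X → Y) (hF : ContDiff ℝ k F)
    (K K' : Set X) (hK : IsCompact K) (hK' : IsCompact K')
    (ε : ℝ) (hε : 0 < ε) :
    ∃ (S : X →L[ℝ] X) (T : Y →L[ℝ] Y),
      FiniteDimensional ℝ (LinearMap.range (S : X →ₗ[ℝ] X)) ∧
      FiniteDimensional ℝ (LinearMap.range (T : Y →ₗ[ℝ] Y)) ∧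
      ∀ i ≤ k, ∀ x ∈ K, ∀ h : Fin i → X, (∀ j, h j ∈ K') →
        ‖iteratedFDeriv ℝ i F x h -
          T (iteratedFDeriv ℝ i F (S x) (fun j => S (h j)))‖ < ε := by
  obtain ⟨S, hSfin, hS⟩ := hX.exists_iteratedFDeriv_comp_near hF hK hK' (half_pos hε)
  obtain ⟨T, hTfin, hT⟩ := hY _ (isCompact_iUnion_iteratedFDeriv_comp hF S hK hK') _ (half_pos hε)
  refine ⟨S, T, hSfin, hTfin, fun i hi x hx h hh => ?_⟩
  have hTh := hT _ (mem_biUnion (x := i) hi ⟨(x, h), ⟨hx, fun j _ => hh j⟩, rfl⟩)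
  calc _ ≤ ‖iteratedFDeriv ℝ i F x h - iteratedFDeriv ℝ i F (S x) (fun j => S (h j))‖ +
        ‖iteratedFDeriv ℝ i F (S x) (fun j => S (h j)) -
          T (iteratedFDeriv ℝ i F (S x) (fun j => S (h j)))‖ :=
        norm_sub_le_norm_sub_add_norm_sub _ _ _
    _ < ε / 2 + ε / 2 := add_lt_add (hS i hi x hx h hh) hTh
    _ = ε := add_halves ε

/-- for Banach spaces `X`, `Y` with the approximation property and any
`C^k` map `F : X → Y`, cylindrical approximations `T ∘ F ∘ S` by finite-rank operators
`S`, `T` approximate `F` and all derivatives up to order `k` uniformly on compacts. -/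
theorem stmt_3 {X Y : Type*} [NormedAddCommGroup X] [NormedSpace ℝ X] [CompleteSpace X]
    [NormedAddCommGroup Y] [NormedSpace ℝ Y] [CompleteSpace Y]
    (hX : HasApproxProperty X) (hY : HasApproxProperty Y) (k : ℕ)
    (F : X → Y) (hF : ContDiff ℝ k F)
    (K K' : Set X) (hK : IsCompact K) (hK' : IsCompact K')
    (ε : ℝ) (hε : 0 < ε) :
    ∃ (S : X →L[ℝ] X) (T : Y →L[ℝ] Y),
      FiniteDimensional ℝ (LinearMap.range (S : X →ₗ[ℝ] X)) ∧
      FiniteDimensional ℝ (LinearMap.range (T : Y →ₗ[ℝ] Y)) ∧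
      ∀ i ≤ k, ∀ x ∈ K, ∀ h : Fin i → X, (∀ j, h j ∈ K') →
        ‖iteratedFDeriv ℝ i F x h -
          T (iteratedFDeriv ℝ i F (S x) (fun j => S (h j)))‖ < ε :=
  stmt_3_general hX hY k F hF K K' hK hK' ε hε
end

section
/- Let X and Y be separable real Banach spaces satisfying the bounded approximation property witnessed by sequences (S_d) on X and (T_m) on Y of finite-rank continuous linear operators converging pointwise to the respective identities with norms bounded by λ. Let k ∈ ℕ, p ≥ 1, q ≥ 0, and let μ be a finite Borel measure on X × X^k satisfying the Radon–Nikodym domination assumption and ‖μ‖_{k,q,p} := ∫_{X×X^k} (1 + ‖x‖^q) ∏_{j=1}^k (1 + ‖h^j‖^p) dμ < ∞. Let (𝒩_{N,N'}) be a family of finite-dimensional approximators with the Sobolev density property. Then for every k-times continuously Fréchet differentiable F : X → Y admitting a constant C_F with ‖D^i F(x)‖_{L^i(X,Y)}^p ≤ C_F (1 + ‖x‖^q) for all x ∈ X and 0 ≤ i ≤ k, and for every ε > 0, there exist N, N' ∈ ℕ, continuous linear maps E : X → ℝ^N and D : ℝ^{N'} → Y, and f ∈ 𝒩_{N,N'}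 such that ‖F − D ∘ f ∘ E‖_{W^{k,p}_{B,μ}} < ε. -/
open MeasureTheory Filter
open scoped Topology ENNReal NNReal

/-- The marginal `μ^{0:i}` on `X × X^i` of a measure `μ` on `X × X^k`, for `i ≤ k`. -/
noncomputable def marginalUpTo {X : Type*} [MeasurableSpace X] {k : ℕ}
    (μ : Measure (X × (Fin k → X))) (i : ℕ) (hik : i ≤ k) :
    Measure (X × (Fin i → X)) :=
  μ.map fun z => (z.1, fun j => z.2 (Fin.castLE hik j))

/-!
Three approximations, each measured in `L^p(μ^{0:i})` for every `i ≤ k`. First `F` is replaced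
by `T_m ∘ F`, then by `T_m ∘ F ∘ S_d`: in both cases the errors converge pointwise to `0` and,
by the growth bound and `‖S_d‖, ‖T_m‖ ≤ λ`, are dominated uniformly by a multiple of
`(1 + ‖x‖^q)^{1/p} ∏ ‖hʳ‖`, which `‖μ‖_{k,q,p} < ∞` puts in `L^p`, so dominated convergence
applies. As `S_d` and `T_m` have finite rank, `T_m ∘ F ∘ S_d = D ∘ g ∘ E` with
`g : ℝ^N → ℝ^{N'}`. The Radon–Nikodym domination bounds the error of `D ∘ (g - f) ∘ E` on
`μ^{0:i}` by that of `g - f` on the image of `μ^0` under `E`, which the Sobolev density property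
makes small. Minkowski's inequality adds up the three errors.
-/

lemma exists_forall_le_of_eventually {α : Type*} {l : Filter α} [l.NeBot] {k : ℕ}
    {P : (i : ℕ) → i ≤ k → α → Prop} (h : ∀ i hi, ∀ᶠ a in l, P i hi a) :
    ∃ a, ∀ i hi, P i hi a := by
  obtain ⟨a, ha⟩ :=
    (eventually_all.2 fun i : Fin (k + 1) => h i (Nat.lt_succ_iff.1 i.2)).exists
  exact ⟨a, fun i hi => ha ⟨i, Nat.lt_succ_of_le hi⟩⟩

lemma exists_pos_forall_le_mul_ofReal_lt {k : ℕ} {K : ℕ → ℝ≥0∞} (hK : ∀ i ≤ k, K i ≠ ⊤)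
    {η : ℝ≥0∞} (hη : 0 < η) : ∃ δ : ℝ, 0 < δ ∧ ∀ i ≤ k, K i * ENNReal.ofReal δ < η := by
  suffices ∃ δ : ℝ, ∀ i ≤ k, 0 < δ ∧ K i * ENNReal.ofReal δ < η by
    obtain ⟨δ, hδ⟩ := this
    exact ⟨δ, (hδ 0 k.zero_le).1, fun i hi => (hδ i hi).2⟩
  refine exists_forall_le_of_eventually (l := 𝓝[>] 0) fun i hi => ?_
  have hofReal : Tendsto ENNReal.ofReal (𝓝[>] 0) (𝓝 0) := by
    simpa using (ENNReal.tendsto_ofReal tendsto_id).mono_left (nhdsWithin_le_nhds (a := (0 : ℝ)))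
  have hlim : Tendsto (fun δ => K i * ENNReal.ofReal δ) (𝓝[>] 0) (𝓝 0) := by
    simpa using ENNReal.Tendsto.const_mul hofReal (Or.inr (hK i hi))
  exact eventually_mem_nhdsWithin.and (hlim.eventually_lt_const hη)

lemma prod_castLE_le_prod_one_add {k i : ℕ} (hik : i ≤ k) (a : Fin k → ℝ≥0∞) :
    ∏ r : Fin i, a (Fin.castLE hik r) ≤ ∏ j, (1 + a j) :=
  calc ∏ r : Fin i, a (Fin.castLE hik r)
      ≤ ∏ r : Fin i, (1 + a (Fin.castLE hik r)) := Finset.prod_le_prod' fun r _ => le_add_self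
    _ = ∏ j ∈ Finset.univ.map (Fin.castLEEmb hik), (1 + a j) := by rw [Finset.prod_map]; rfl
    _ ≤ ∏ j, (1 + a j) :=
        Finset.prod_le_prod_of_subset_of_one_le' (Finset.subset_univ _) fun _ _ _ => le_self_add

section Lp

variable {α E : Type*} [MeasurableSpace α] [NormedAddCommGroup E] {ρ : Measure α} {p : ℝ}

lemma eLpNorm_ofReal_lt_ofReal_iff (hp : 0 < p) {ε : ℝ} (hε : 0 ≤ ε) {f : α → E} :
    eLpNorm f (ENNReal.ofReal p) ρ < ENNReal.ofReal ε ↔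
      ∫⁻ x, ‖f x‖ₑ ^ p ∂ρ < ENNReal.ofReal (ε ^ p) := by
  rw [eLpNorm_eq_lintegral_rpow_enorm_toReal (by simpa using hp) ENNReal.ofReal_ne_top,
    ENNReal.toReal_ofReal hp.le, one_div, ENNReal.rpow_inv_lt_iff hp,
    ENNReal.ofReal_rpow_of_nonneg hε hp.le]

lemma MeasureTheory.MemLp.lintegral_enorm_rpow_lt_top {f : α → E}
    (hf : MemLp f (ENNReal.ofReal p) ρ) (hp : 0 < p) : ∫⁻ x, ‖f x‖ₑ ^ p ∂ρ < ⊤ := by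
  simpa [ENNReal.toReal_ofReal hp.le] using
    lintegral_rpow_enorm_lt_top_of_eLpNorm_lt_top (by simpa using hp) ENNReal.ofReal_ne_top hf.2

lemma tendsto_eLpNorm_of_dominated (hp : 0 < p) {G : ℕ → α → E}
    (hG : ∀ n, AEStronglyMeasurable (G n) ρ) {b : α → ℝ} (hb : MemLp b (ENNReal.ofReal p) ρ)
    (hbound : ∀ n x, ‖G n x‖ ≤ b x) (hlim : ∀ x, Tendsto (fun n => G n x) atTop (𝓝 0)) :
    Tendsto (fun n => eLpNorm (G n) (ENNReal.ofReal p) ρ) atTop (𝓝 0) := by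
  have hint : Tendsto (fun n => ∫⁻ x, ‖G n x‖ₑ ^ p ∂ρ) atTop (𝓝 0) := by
    simpa using tendsto_lintegral_of_dominated_convergence' (f := fun _ => 0)
      (fun x => ‖b x‖ₑ ^ p) (fun n => (hG n).enorm.pow_const p)
      (fun n => ae_of_all _ fun x => ENNReal.rpow_le_rpow
        (enorm_le_iff_norm_le.2 ((hbound n x).trans (Real.le_norm_self _))) hp.le)
      (hb.lintegral_enorm_rpow_lt_top hp).ne
      (ae_of_all _ fun x => by
        simpa [ENNReal.zero_rpow_of_pos hp] using (hlim x).enorm.ennrpow_const p)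
  simp_rw [eLpNorm_eq_lintegral_rpow_enorm_toReal (by simpa using hp) ENNReal.ofReal_ne_top,
    ENNReal.toReal_ofReal hp.le]
  simpa [ENNReal.zero_rpow_of_pos (inv_pos.2 hp)] using hint.ennrpow_const (1 / p)

end Lp

lemma lintegral_comp_fst_mul_le {β γ : Type*} [MeasurableSpace β] [MeasurableSpace γ]
    {ρ : Measure (β × γ)} {ν : Measure β} {w : β × γ → ℝ≥0∞} (hw : Measurable w) {c : ℝ≥0∞}
    (hdom : ∀ A, MeasurableSet A → ∫⁻ z in Prod.fst ⁻¹' A, w z ∂ρ ≤ c * ν A)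
    {φ : β → ℝ≥0∞} (hφ : Measurable φ) :
    ∫⁻ z, φ z.1 * w z ∂ρ ≤ c * ∫⁻ x, φ x ∂ν := by
  have hmap : (ρ.withDensity w).map Prod.fst ≤ c • ν := by
    refine Measure.le_intro fun A hA _ => ?_
    rw [Measure.map_apply measurable_fst hA, withDensity_apply _ (measurable_fst hA)]
    exact hdom A hA
  calc ∫⁻ z, φ z.1 * w z ∂ρ = ∫⁻ z, φ z.1 ∂(ρ.withDensity w) := by
        simp_rw [mul_comm (φ _)]
        exact (lintegral_withDensity_eq_lintegral_mul _ hw (hφ.comp measurable_fst)).symm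
    _ = ∫⁻ x, φ x ∂((ρ.withDensity w).map Prod.fst) := (lintegral_map hφ measurable_fst).symm
    _ ≤ ∫⁻ x, φ x ∂(c • ν) := lintegral_mono' hmap le_rfl
    _ = c * ∫⁻ x, φ x ∂ν := lintegral_smul_measure c φ

section Weight

variable {X : Type*} [NormedAddCommGroup X] {p q : ℝ}

noncomputable def polyWeight (p q : ℝ) (x : X) : ℝ := (1 + ‖x‖ ^ q) ^ p⁻¹

lemma polyWeight_pos (x : X) : 0 < polyWeight p q x := by
  unfold polyWeight; positivity

lemma norm_le_mul_polyWeight_of_rpow_le {E : Type*} [SeminormedAddGroup E] {a : E} {x : X}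
    {C : ℝ} (hp : 0 < p) (h : ‖a‖ ^ p ≤ C * (1 + ‖x‖ ^ q)) :
    ‖a‖ ≤ C ^ p⁻¹ * polyWeight p q x := by
  have hx : 0 < 1 + ‖x‖ ^ q := by positivity
  have hC : 0 ≤ C := nonneg_of_mul_nonneg_left ((by positivity : (0 : ℝ) ≤ ‖a‖ ^ p).trans h) hx
  rwa [polyWeight, ← Real.mul_rpow hC hx.le,
    Real.le_rpow_inv_iff_of_pos (norm_nonneg a) (by positivity) hp]

lemma polyWeight_clm_apply_le {U : Type*} [NormedAddCommGroup U] [NormedSpace ℝ X]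
    [NormedSpace ℝ U] (hp : 0 ≤ p) (hq : 0 ≤ q) {A : X →L[ℝ] U} {a : ℝ} (hA : ‖A‖ ≤ a)
    (x : X) : polyWeight p q (A x) ≤ ((1 + a) ^ q) ^ p⁻¹ * polyWeight p q x := by
  have ha : 0 ≤ a := (norm_nonneg A).trans hA
  have hAx : ‖A x‖ ^ q ≤ (1 + a) ^ q * ‖x‖ ^ q := by
    rw [← Real.mul_rpow (by linarith) (norm_nonneg x)]
    exact Real.rpow_le_rpow (norm_nonneg _)
      ((A.le_opNorm x).trans (by gcongr; linarith)) hq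
  have h1a : 1 ≤ (1 + a) ^ q := Real.one_le_rpow (by linarith) hq
  have hxq : 0 ≤ ‖x‖ ^ q := by positivity
  rw [polyWeight, polyWeight, ← Real.mul_rpow (by positivity) (by positivity)]
  exact Real.rpow_le_rpow (by positivity) (by nlinarith) (inv_nonneg.2 hp)

lemma enorm_polyWeight_rpow (hp : 0 < p) (x : X) :
    ‖polyWeight p q x‖ₑ ^ p = ENNReal.ofReal (1 + ‖x‖ ^ q) := by
  rw [← ofReal_norm, Real.norm_of_nonneg (polyWeight_pos x).le,
    ENNReal.ofReal_rpow_of_nonneg (polyWeight_pos x).le hp.le, polyWeight,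
    ← Real.rpow_mul (by positivity), inv_mul_cancel₀ hp.ne', Real.rpow_one]

noncomputable def jetWeight {i : ℕ} (p q : ℝ) (z : X × (Fin i → X)) : ℝ :=
  polyWeight p q z.1 * ∏ r, ‖z.2 r‖

lemma enorm_jetWeight_rpow (hp : 0 < p) {i : ℕ} (z : X × (Fin i → X)) :
    ‖jetWeight p q z‖ₑ ^ p = ENNReal.ofReal (1 + ‖z.1‖ ^ q) * ∏ r, ‖z.2 r‖ₑ ^ p := by
  rw [jetWeight, enorm_mul, ENNReal.mul_rpow_of_nonneg _ _ hp.le, enorm_polyWeight_rpow hp,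
    ENNReal.prod_rpow_of_nonneg hp.le, ← ofReal_norm, Real.norm_of_nonneg (by positivity),
    ENNReal.ofReal_prod_of_nonneg (fun r _ => norm_nonneg _)]
  simp_rw [ofReal_norm]

lemma norm_apply_le_mul_jetWeight [NormedSpace ℝ X] {Y : Type*} [NormedAddCommGroup Y]
    [NormedSpace ℝ Y] {i : ℕ} {G : X → ContinuousMultilinearMap ℝ (fun _ : Fin i => X) Y}
    {c : ℝ} (hG : ∀ x, ‖G x‖ ≤ c * polyWeight p q x) (z : X × (Fin i → X)) :
    ‖G z.1 z.2‖ ≤ c * jetWeight p q z :=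
  calc ‖G z.1 z.2‖ ≤ ‖G z.1‖ * ∏ r, ‖z.2 r‖ := (G z.1).le_opNorm z.2
    _ ≤ c * polyWeight p q z.1 * ∏ r, ‖z.2 r‖ := by gcongr; exact hG z.1
    _ = c * jetWeight p q z := by rw [jetWeight, mul_assoc]

end Weight

section Marginal

variable {X : Type*} [NormedAddCommGroup X] [MeasurableSpace X] {k : ℕ}
  {μ : Measure (X × (Fin k → X))} {p q : ℝ}

lemma memLp_jetWeight_marginalUpTo [OpensMeasurableSpace X] (hp : 0 < p)
    (hμ : ∫⁻ z, ENNReal.ofReal (1 + ‖z.1‖ ^ q) * ∏ j, (1 + (‖z.2 j‖₊ : ℝ≥0∞) ^ p) ∂μ < ⊤)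
    (i : ℕ) (hik : i ≤ k) :
    MemLp (jetWeight p q) (ENNReal.ofReal p) (marginalUpTo μ i hik) := by
  have hmeas : Measurable (jetWeight p q : X × (Fin i → X) → ℝ) := by
    unfold jetWeight polyWeight; fun_prop
  refine ⟨hmeas.aestronglyMeasurable, ?_⟩
  rw [eLpNorm_lt_top_iff_lintegral_rpow_enorm_lt_top (by simpa using hp) ENNReal.ofReal_ne_top,
    ENNReal.toReal_ofReal hp.le]
  simp_rw [enorm_jetWeight_rpow hp]
  rw [marginalUpTo, lintegral_map (by fun_prop) (by fun_prop)]
  refine lt_of_le_of_lt (lintegral_mono fun z => ?_) hμ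
  gcongr
  exact prod_castLE_le_prod_one_add hik fun j => ‖z.2 j‖ₑ ^ p

lemma memLp_polyWeight_map_fst [OpensMeasurableSpace X] (hp : 0 < p)
    (hμ : ∫⁻ z, ENNReal.ofReal (1 + ‖z.1‖ ^ q) * ∏ j, (1 + (‖z.2 j‖₊ : ℝ≥0∞) ^ p) ∂μ < ⊤) :
    MemLp (polyWeight p q) (ENNReal.ofReal p) (μ.map Prod.fst) := by
  have hmeas : Measurable (polyWeight p q : X → ℝ) := by unfold polyWeight; fun_prop
  refine ⟨hmeas.aestronglyMeasurable, ?_⟩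
  rw [eLpNorm_lt_top_iff_lintegral_rpow_enorm_lt_top (by simpa using hp) ENNReal.ofReal_ne_top,
    ENNReal.toReal_ofReal hp.le]
  simp_rw [enorm_polyWeight_rpow hp]
  rw [lintegral_map (by fun_prop) measurable_fst]
  refine lt_of_le_of_lt (lintegral_mono fun z => ?_) hμ
  exact le_mul_of_one_le_right' (Finset.one_le_prod' fun j _ => le_self_add)

/-- The `+ 1` takes care of `i = 0`, where the weight is `1` and `μ^{0:0}` projects onto `μ^0`. -/
lemma setLIntegral_marginalUpTo_le {C : ℕ → ℝ}
    (hRNdom : ∀ i, 1 ≤ i → ∀ hik : i ≤ k, ∀ A : Set X, MeasurableSet A →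
      ∫⁻ z in Prod.fst ⁻¹' A, ∏ r, (‖z.2 r‖₊ : ℝ≥0∞) ^ p ∂(marginalUpTo μ i hik) ≤
        ENNReal.ofReal (C i) * (μ.map Prod.fst) A)
    (i : ℕ) (hik : i ≤ k) (A : Set X) (hA : MeasurableSet A) :
    ∫⁻ z in Prod.fst ⁻¹' A, ∏ r, ‖z.2 r‖ₑ ^ p ∂(marginalUpTo μ i hik) ≤
      (ENNReal.ofReal (C i) + 1) * (μ.map Prod.fst) A := by
  rcases Nat.eq_zero_or_pos i with rfl | hi
  · simp only [Finset.univ_eq_empty, Finset.prod_empty, setLIntegral_one]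
    rw [marginalUpTo, Measure.map_apply (by fun_prop) (measurable_fst hA),
      Measure.map_apply measurable_fst hA]
    exact le_mul_of_one_le_left' le_add_self
  · exact (hRNdom i hi hik A hA).trans (by gcongr; exact le_self_add)

end Marginal

lemma memLp_polyWeight_map_clm {X U : Type*} [NormedAddCommGroup X] [NormedSpace ℝ X]
    [MeasurableSpace X] [OpensMeasurableSpace X] [NormedAddCommGroup U] [NormedSpace ℝ U]
    [MeasurableSpace U] [BorelSpace U] {p q : ℝ} (hp : 0 ≤ p) (hq : 0 ≤ q) {r : ℝ≥0∞}
    {ν : Measure X} (hν : MemLp (polyWeight p q) r ν) (A : X →L[ℝ] U) :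
    MemLp (polyWeight p q) r (ν.map A) := by
  have hmeas : Measurable (polyWeight p q : U → ℝ) := by unfold polyWeight; fun_prop
  rw [memLp_map_measure_iff hmeas.aestronglyMeasurable A.continuous.aemeasurable]
  refine (hν.const_mul (((1 + ‖A‖) ^ q) ^ p⁻¹)).of_le
    (hmeas.comp A.continuous.measurable).aestronglyMeasurable (ae_of_all _ fun x => ?_)
  rw [Function.comp_apply, Real.norm_of_nonneg (polyWeight_pos _).le,
    Real.norm_of_nonneg (mul_nonneg (by positivity) (polyWeight_pos _).le)]
  exact polyWeight_clm_apply_le hp hq le_rfl x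

lemma lintegral_enorm_rpow_lt_top_of_le_polyWeight {U Z : Type*} [NormedAddCommGroup U]
    [MeasurableSpace U] [NormedAddCommGroup Z] {p q : ℝ} (hp : 0 < p) {ν : Measure U}
    (hν : MemLp (polyWeight p q) (ENNReal.ofReal p) ν) {G : U → Z}
    (hG : AEStronglyMeasurable G ν) {c : ℝ} (hc : ∀ u, ‖G u‖ ≤ c * polyWeight p q u) :
    ∫⁻ u, ‖G u‖ₑ ^ p ∂ν < ⊤ :=
  ((hν.const_mul c).of_le hG <| ae_of_all _ fun u =>
    (hc u).trans (Real.le_norm_self _)).lintegral_enorm_rpow_lt_top hp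

section Calculus

variable {X U V Y : Type*} [NormedAddCommGroup X] [NormedSpace ℝ X] [NormedAddCommGroup U]
  [NormedSpace ℝ U] [NormedAddCommGroup V] [NormedSpace ℝ V] [NormedAddCommGroup Y]
  [NormedSpace ℝ Y] {n : WithTop ℕ∞} {i : ℕ}

lemma ContDiff.continuous_iteratedFDeriv_apply {F : X → Y} (hF : ContDiff ℝ n F)
    (hi : (i : WithTop ℕ∞) ≤ n) :
    Continuous fun z : X × (Fin i → X) => iteratedFDeriv ℝ i F z.1 z.2 :=
  continuous_eval.comp
    (((hF.continuous_iteratedFDeriv hi).comp continuous_fst).prodMk continuous_snd)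

lemma iteratedFDeriv_clm_comp_comp {h : U → V} (hh : ContDiff ℝ n h)
    (hi : (i : WithTop ℕ∞) ≤ n) (A : X →L[ℝ] U) (B : V →L[ℝ] Y) (x : X) :
    iteratedFDeriv ℝ i (fun x => B (h (A x))) x =
      B.compContinuousMultilinearMap
        ((iteratedFDeriv ℝ i h (A x)).compContinuousLinearMap fun _ => A) := by
  rw [show (fun x => B (h (A x))) = B ∘ (h ∘ A) from rfl,
    B.iteratedFDeriv_comp_left (hh.comp A.contDiff).contDiffAt hi,
    A.iteratedFDeriv_comp_right hh x hi]

lemma iteratedFDeriv_clm_comp_comp_apply {h : U → V} (hh : ContDiff ℝ n h)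
    (hi : (i : WithTop ℕ∞) ≤ n) (A : X →L[ℝ] U) (B : V →L[ℝ] Y) (x : X) (v : Fin i → X) :
    iteratedFDeriv ℝ i (fun x => B (h (A x))) x v =
      B (iteratedFDeriv ℝ i h (A x) fun r => A (v r)) := by
  rw [iteratedFDeriv_clm_comp_comp hh hi]
  rfl

lemma norm_iteratedFDeriv_clm_comp_comp_le {h : U → V} (hh : ContDiff ℝ n h)
    (hi : (i : WithTop ℕ∞) ≤ n) (A : X →L[ℝ] U) (B : V →L[ℝ] Y) (x : X) :
    ‖iteratedFDeriv ℝ i (fun x => B (h (A x))) x‖ ≤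
      ‖B‖ * ‖A‖ ^ i * ‖iteratedFDeriv ℝ i h (A x)‖ := by
  rw [iteratedFDeriv_clm_comp_comp hh hi]
  calc _ ≤ ‖B‖ * (‖iteratedFDeriv ℝ i h (A x)‖ * ∏ _r : Fin i, ‖A‖) :=
        (B.norm_compContinuousMultilinearMap_le _).trans
          (by gcongr; exact ContinuousMultilinearMap.norm_compContinuousLinearMap_le _ _)
    _ = _ := by rw [Finset.prod_const, Finset.card_univ, Fintype.card_fin]; ring

lemma enorm_iteratedFDeriv_clm_comp_comp_apply_le {h : U → V} (hh : ContDiff ℝ n h)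
    (hi : (i : WithTop ℕ∞) ≤ n) (A : X →L[ℝ] U) (B : V →L[ℝ] Y) (x : X) (v : Fin i → X) :
    ‖iteratedFDeriv ℝ i (fun x => B (h (A x))) x v‖ₑ ≤
      ‖B‖ₑ * ‖A‖ₑ ^ i * ‖iteratedFDeriv ℝ i h (A x)‖ₑ * ∏ r, ‖v r‖ₑ := by
  simp only [enorm_eq_nnnorm, ← ENNReal.coe_pow, ← ENNReal.coe_mul,
    ← ENNReal.ofNNReal_finsetProd, ENNReal.coe_le_coe, ← NNReal.coe_le_coe]
  push_cast
  exact ((iteratedFDeriv ℝ i (fun x => B (h (A x))) x).le_opNorm v).trans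
    (by gcongr; exact norm_iteratedFDeriv_clm_comp_comp_le hh hi A B x)

lemma norm_iteratedFDeriv_clm_comp_comp_le_polyWeight {p q : ℝ} (hp : 0 ≤ p) (hq : 0 ≤ q)
    {h : U → V} (hh : ContDiff ℝ n h) (hi : (i : WithTop ℕ∞) ≤ n) {c a b : ℝ}
    (hc : ∀ y, ‖iteratedFDeriv ℝ i h y‖ ≤ c * polyWeight p q y) {A : X →L[ℝ] U}
    {B : V →L[ℝ] Y} (hA : ‖A‖ ≤ a) (hB : ‖B‖ ≤ b) (x : X) :
    ‖iteratedFDeriv ℝ i (fun x => B (h (A x))) x‖ ≤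
      b * a ^ i * c * ((1 + a) ^ q) ^ p⁻¹ * polyWeight p q x := by
  have hc0 : 0 ≤ c := nonneg_of_mul_nonneg_left ((norm_nonneg _).trans (hc 0)) (polyWeight_pos 0)
  calc _ ≤ ‖B‖ * ‖A‖ ^ i * ‖iteratedFDeriv ℝ i h (A x)‖ :=
        norm_iteratedFDeriv_clm_comp_comp_le hh hi A B x
    _ ≤ b * a ^ i * (c * (((1 + a) ^ q) ^ p⁻¹ * polyWeight p q x)) := by
        have ha : 0 ≤ a := (norm_nonneg A).trans hA
        have hb : 0 ≤ b := (norm_nonneg B).trans hB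
        gcongr
        exact (hc _).trans (mul_le_mul_of_nonneg_left (polyWeight_clm_apply_le hp hq hA x) hc0)
    _ = _ := by ring

lemma ContinuousLinearMap.exists_comp_eq_of_finiteDimensional_range (S : X →L[ℝ] Y)
    [FiniteDimensional ℝ (LinearMap.range (S : X →ₗ[ℝ] Y))] :
    ∃ (N : ℕ) (E : X →L[ℝ] (Fin N → ℝ)) (L : (Fin N → ℝ) →L[ℝ] Y), ∀ x, L (E x) = S x := by
  set R := LinearMap.range (S : X →ₗ[ℝ] Y)
  let e := (Module.finBasis ℝ R).equivFun.toContinuousLinearEquiv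
  refine ⟨_, (e : R →L[ℝ] _).comp (S.codRestrict R fun x => LinearMap.mem_range_self _ x),
    R.subtypeL.comp e.symm.toContinuousLinearMap, fun x => ?_⟩
  simp

end Calculus

lemma eLpNorm_sub_le_add_add {α E : Type*} [MeasurableSpace α] [NormedAddCommGroup E]
    {ρ : Measure α} {r : ℝ≥0∞} (hr : 1 ≤ r) {f₁ f₂ f₃ f₄ : α → E}
    (h₁ : AEStronglyMeasurable f₁ ρ) (h₂ : AEStronglyMeasurable f₂ ρ)
    (h₃ : AEStronglyMeasurable f₃ ρ) (h₄ : AEStronglyMeasurable f₄ ρ) :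
    eLpNorm (f₁ - f₄) r ρ ≤ eLpNorm (f₁ - f₂) r ρ + eLpNorm (f₂ - f₃) r ρ + eLpNorm (f₃ - f₄) r ρ :=
  calc eLpNorm (f₁ - f₄) r ρ = eLpNorm (f₁ - f₂ + (f₂ - f₃) + (f₃ - f₄)) r ρ := by
        congr 1; abel
    _ ≤ eLpNorm (f₁ - f₂ + (f₂ - f₃)) r ρ + eLpNorm (f₃ - f₄) r ρ :=
        eLpNorm_add_le ((h₁.sub h₂).add (h₂.sub h₃)) (h₃.sub h₄) hr
    _ ≤ _ := by gcongr; exact eLpNorm_add_le (h₁.sub h₂) (h₂.sub h₃) hr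

section Approximation

variable {X U V Y : Type*} [NormedAddCommGroup X] [NormedSpace ℝ X] [MeasurableSpace X]
  [NormedAddCommGroup U] [NormedSpace ℝ U] [NormedAddCommGroup V] [NormedSpace ℝ V]
  [NormedAddCommGroup Y] [NormedSpace ℝ Y]
  {i : ℕ} {ρ : Measure (X × (Fin i → X))} {p q : ℝ} {n : WithTop ℕ∞} {F : X → Y}

lemma tendsto_eLpNorm_iteratedFDeriv_sub_clm [OpensMeasurableSpace X]
    [SecondCountableTopology X] (hp : 0 < p) (hρ : MemLp (jetWeight p q) (ENNReal.ofReal p) ρ)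
    (hF : ContDiff ℝ n F) (hi : (i : WithTop ℕ∞) ≤ n) {c : ℝ}
    (hFc : ∀ x, ‖iteratedFDeriv ℝ i F x‖ ≤ c * polyWeight p q x) {T : ℕ → Y →L[ℝ] Y}
    {lam : ℝ} (hT : ∀ y, Tendsto (fun m => T m y) atTop (𝓝 y)) (hTb : ∀ m, ‖T m‖ ≤ lam) :
    Tendsto (fun m => eLpNorm (fun z => iteratedFDeriv ℝ i F z.1 z.2 -
      T m (iteratedFDeriv ℝ i F z.1 z.2)) (ENNReal.ofReal p) ρ) atTop (𝓝 0) := by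
  have hcont := hF.continuous_iteratedFDeriv_apply hi
  have hlam : 0 ≤ lam := (norm_nonneg _).trans (hTb 0)
  refine tendsto_eLpNorm_of_dominated hp
    (fun m => (hcont.sub ((T m).continuous.comp hcont)).aestronglyMeasurable)
    (hρ.const_mul ((1 + lam) * c)) (fun m z => ?_) (fun z => ?_)
  · set a := iteratedFDeriv ℝ i F z.1 z.2
    calc ‖a - T m a‖ ≤ ‖a‖ + ‖T m‖ * ‖a‖ :=
          (norm_sub_le _ _).trans (by gcongr; exact (T m).le_opNorm a)
      _ ≤ (1 + lam) * ‖a‖ := by nlinarith [hTb m, norm_nonneg a]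
      _ ≤ (1 + lam) * c * jetWeight p q z := by
          rw [mul_assoc]; gcongr; exact norm_apply_le_mul_jetWeight hFc z
  · simpa using (tendsto_const_nhds (x := iteratedFDeriv ℝ i F z.1 z.2)).sub
      (hT (iteratedFDeriv ℝ i F z.1 z.2))

lemma tendsto_eLpNorm_clm_iteratedFDeriv_sub_comp [OpensMeasurableSpace X]
    [SecondCountableTopology X] (hp : 0 < p) (hq : 0 ≤ q)
    (hρ : MemLp (jetWeight p q) (ENNReal.ofReal p) ρ) (hF : ContDiff ℝ n F)
    (hi : (i : WithTop ℕ∞) ≤ n) {c : ℝ}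
    (hFc : ∀ x, ‖iteratedFDeriv ℝ i F x‖ ≤ c * polyWeight p q x) (B : Y →L[ℝ] V)
    {S : ℕ → X →L[ℝ] X} {lam : ℝ} (hS : ∀ x, Tendsto (fun d => S d x) atTop (𝓝 x))
    (hSb : ∀ d, ‖S d‖ ≤ lam) :
    Tendsto (fun d => eLpNorm (fun z => B (iteratedFDeriv ℝ i F z.1 z.2) -
      iteratedFDeriv ℝ i (fun x => B (F (S d x))) z.1 z.2) (ENNReal.ofReal p) ρ) atTop (𝓝 0) := by
  have hcont := hF.continuous_iteratedFDeriv_apply hi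
  have hcomp : ∀ d, ContDiff ℝ n fun x => B (F (S d x)) :=
    fun d => B.contDiff.comp (hF.comp (S d).contDiff)
  refine tendsto_eLpNorm_of_dominated hp
    (fun d => ((B.continuous.comp hcont).sub
      ((hcomp d).continuous_iteratedFDeriv_apply hi)).aestronglyMeasurable)
    (hρ.const_mul (‖B‖ * c + ‖B‖ * lam ^ i * c * ((1 + lam) ^ q) ^ p⁻¹))
    (fun d z => ?_) (fun z => ?_)
  · calc _ ≤ ‖B (iteratedFDeriv ℝ i F z.1 z.2)‖ +
          ‖iteratedFDeriv ℝ i (fun x => B (F (S d x))) z.1 z.2‖ := norm_sub_le _ _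
      _ ≤ ‖B‖ * (c * jetWeight p q z) +
          ‖B‖ * lam ^ i * c * ((1 + lam) ^ q) ^ p⁻¹ * jetWeight p q z :=
        add_le_add ((B.le_opNorm _).trans (by gcongr; exact norm_apply_le_mul_jetWeight hFc z))
          (norm_apply_le_mul_jetWeight
            (norm_iteratedFDeriv_clm_comp_comp_le_polyWeight hp.le hq hF hi hFc (hSb d) le_rfl) z)
      _ = _ := by ring
  · have hSz : Tendsto (fun d => ((S d z.1, fun r => S d (z.2 r)) : X × (Fin i → X)))
        atTop (𝓝 z) := (hS z.1).prodMk_nhds (tendsto_pi_nhds.2 fun r => hS (z.2 r))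
    simp_rw [iteratedFDeriv_clm_comp_comp_apply hF hi]
    simpa using (tendsto_const_nhds (x := B (iteratedFDeriv ℝ i F z.1 z.2))).sub
      ((B.continuous.tendsto _).comp ((hcont.tendsto z).comp hSz))

lemma lintegral_enorm_iteratedFDeriv_clm_comp_comp_rpow_le [OpensMeasurableSpace X]
    [MeasurableSpace U] [BorelSpace U] {ν : Measure X} {c : ℝ≥0∞} (hp : 0 ≤ p)
    (hdom : ∀ A : Set X, MeasurableSet A →
      ∫⁻ z in Prod.fst ⁻¹' A, ∏ r, ‖z.2 r‖ₑ ^ p ∂ρ ≤ c * ν A)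
    {h : U → V} (hh : ContDiff ℝ n h) (hi : (i : WithTop ℕ∞) ≤ n) (A : X →L[ℝ] U)
    (B : V →L[ℝ] Y) :
    ∫⁻ z, ‖iteratedFDeriv ℝ i (fun x => B (h (A x))) z.1 z.2‖ₑ ^ p ∂ρ ≤
      (‖B‖ₑ * ‖A‖ₑ ^ i) ^ p * c * ∫⁻ u, ‖iteratedFDeriv ℝ i h u‖ₑ ^ p ∂(ν.map A) := by
  have hφ : Measurable fun u => ‖iteratedFDeriv ℝ i h u‖ₑ ^ p :=
    (hh.continuous_iteratedFDeriv hi).enorm.measurable.pow_const p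
  have hw : Measurable fun z : X × (Fin i → X) => ∏ r, ‖z.2 r‖ₑ ^ p := by fun_prop
  have hpt (z : X × (Fin i → X)) :
      ‖iteratedFDeriv ℝ i (fun x => B (h (A x))) z.1 z.2‖ₑ ^ p ≤ (‖B‖ₑ * ‖A‖ₑ ^ i) ^ p *
        (‖iteratedFDeriv ℝ i h (A z.1)‖ₑ ^ p * ∏ r, ‖z.2 r‖ₑ ^ p) := by
    refine (ENNReal.rpow_le_rpow
      (enorm_iteratedFDeriv_clm_comp_comp_apply_le hh hi A B z.1 z.2) hp).trans_eq ?_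
    rw [ENNReal.mul_rpow_of_nonneg _ _ hp, ENNReal.mul_rpow_of_nonneg _ _ hp,
      ENNReal.prod_rpow_of_nonneg hp, mul_assoc]
  calc _ ≤ ∫⁻ z, (‖B‖ₑ * ‖A‖ₑ ^ i) ^ p *
        (‖iteratedFDeriv ℝ i h (A z.1)‖ₑ ^ p * ∏ r, ‖z.2 r‖ₑ ^ p) ∂ρ := lintegral_mono hpt
    _ = (‖B‖ₑ * ‖A‖ₑ ^ i) ^ p *
        ∫⁻ z, ‖iteratedFDeriv ℝ i h (A z.1)‖ₑ ^ p * ∏ r, ‖z.2 r‖ₑ ^ p ∂ρ :=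
      lintegral_const_mul _ ((hφ.comp (A.measurable.comp measurable_fst)).mul hw)
    _ ≤ (‖B‖ₑ * ‖A‖ₑ ^ i) ^ p * (c * ∫⁻ x, ‖iteratedFDeriv ℝ i h (A x)‖ₑ ^ p ∂ν) := by
      gcongr; exact lintegral_comp_fst_mul_le hw hdom (hφ.comp A.measurable)
    _ = _ := by rw [lintegral_map hφ A.measurable, mul_assoc]

lemma eLpNorm_iteratedFDeriv_clm_comp_comp_le [OpensMeasurableSpace X] [MeasurableSpace U]
    [BorelSpace U] {ν : Measure X} {c : ℝ≥0∞} (hp : 0 < p)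
    (hdom : ∀ A : Set X, MeasurableSet A →
      ∫⁻ z in Prod.fst ⁻¹' A, ∏ r, ‖z.2 r‖ₑ ^ p ∂ρ ≤ c * ν A)
    {h : U → V} (hh : ContDiff ℝ n h) (hi : (i : WithTop ℕ∞) ≤ n) (A : X →L[ℝ] U)
    (B : V →L[ℝ] Y) :
    eLpNorm (fun z => iteratedFDeriv ℝ i (fun x => B (h (A x))) z.1 z.2) (ENNReal.ofReal p) ρ ≤
      ‖B‖ₑ * ‖A‖ₑ ^ i * c ^ p⁻¹ *
        eLpNorm (iteratedFDeriv ℝ i h) (ENNReal.ofReal p) (ν.map A) := by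
  simp_rw [eLpNorm_eq_lintegral_rpow_enorm_toReal (by simpa using hp) ENNReal.ofReal_ne_top,
    ENNReal.toReal_ofReal hp.le, one_div]
  calc _ ≤ ((‖B‖ₑ * ‖A‖ₑ ^ i) ^ p * c *
        ∫⁻ u, ‖iteratedFDeriv ℝ i h u‖ₑ ^ p ∂(ν.map A)) ^ p⁻¹ :=
      ENNReal.rpow_le_rpow
        (lintegral_enorm_iteratedFDeriv_clm_comp_comp_rpow_le hp.le hdom hh hi A B)
        (by positivity)
    _ = _ := by
      rw [ENNReal.mul_rpow_of_nonneg _ _ (by positivity),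
        ENNReal.mul_rpow_of_nonneg _ _ (by positivity), ← ENNReal.rpow_mul,
        mul_inv_cancel₀ hp.ne', ENNReal.rpow_one]

end Approximation

lemma eLpNorm_iteratedFDeriv_sub_clm_comp_comp_le {X U V Y : Type*} [NormedAddCommGroup X]
    [NormedSpace ℝ X] [MeasurableSpace X] [OpensMeasurableSpace X] [SecondCountableTopology X]
    [NormedAddCommGroup U] [NormedSpace ℝ U] [MeasurableSpace U] [BorelSpace U]
    [NormedAddCommGroup V] [NormedSpace ℝ V] [NormedAddCommGroup Y] [NormedSpace ℝ Y]
    {i : ℕ} {ρ : Measure (X × (Fin i → X))} {ν : Measure X} {p : ℝ} {c : ℝ≥0∞} (hp : 1 ≤ p)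
    (hdom : ∀ A : Set X, MeasurableSet A →
      ∫⁻ z in Prod.fst ⁻¹' A, ∏ r, ‖z.2 r‖ₑ ^ p ∂ρ ≤ c * ν A)
    {n : WithTop ℕ∞} {F : X → Y} {g f : U → V} (hF : ContDiff ℝ n F) (hg : ContDiff ℝ n g)
    (hf : ContDiff ℝ n f) (hi : (i : WithTop ℕ∞) ≤ n) (T : Y →L[ℝ] Y) (S : X →L[ℝ] X)
    (E : X →L[ℝ] U) (D : V →L[ℝ] Y) (hDgE : ∀ x, D (g (E x)) = T (F (S x))) :
    eLpNorm (fun z => iteratedFDeriv ℝ i F z.1 z.2 -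
        iteratedFDeriv ℝ i (fun x => D (f (E x))) z.1 z.2) (ENNReal.ofReal p) ρ ≤
      eLpNorm (fun z => iteratedFDeriv ℝ i F z.1 z.2 - T (iteratedFDeriv ℝ i F z.1 z.2))
          (ENNReal.ofReal p) ρ +
        eLpNorm (fun z => T (iteratedFDeriv ℝ i F z.1 z.2) -
          iteratedFDeriv ℝ i (fun x => T (F (S x))) z.1 z.2) (ENNReal.ofReal p) ρ +
        ‖D‖ₑ * ‖E‖ₑ ^ i * c ^ p⁻¹ *
          eLpNorm (iteratedFDeriv ℝ i g - iteratedFDeriv ℝ i f) (ENNReal.ofReal p) (ν.map E) := by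
  have hTFS : (fun x => T (F (S x))) = fun x => D (g (E x)) := funext fun x => (hDgE x).symm
  have hsub : iteratedFDeriv ℝ i g - iteratedFDeriv ℝ i f = iteratedFDeriv ℝ i (g - f) :=
    funext fun y => (iteratedFDeriv_sub_apply ((hg.of_le hi).contDiffAt)
      ((hf.of_le hi).contDiffAt)).symm
  have hthird : (fun z : X × (Fin i → X) => iteratedFDeriv ℝ i (fun x => D (g (E x))) z.1 z.2) -
      (fun z => iteratedFDeriv ℝ i (fun x => D (f (E x))) z.1 z.2) =
      fun z => iteratedFDeriv ℝ i (fun x => D ((g - f) (E x))) z.1 z.2 := by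
    funext z
    rw [Pi.sub_apply, iteratedFDeriv_clm_comp_comp_apply hg hi,
      iteratedFDeriv_clm_comp_comp_apply hf hi,
      iteratedFDeriv_clm_comp_comp_apply (h := g - f) (hg.sub hf) hi, ← hsub, ← map_sub]
    rfl
  have hmeas (H : X → Y) (hH : ContDiff ℝ n H) :
      AEStronglyMeasurable (fun z => iteratedFDeriv ℝ i H z.1 z.2) ρ :=
    (hH.continuous_iteratedFDeriv_apply hi).aestronglyMeasurable
  calc _ ≤ _ := eLpNorm_sub_le_add_add (ENNReal.one_le_ofReal.2 hp) (hmeas F hF)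
        (T.continuous.comp (hF.continuous_iteratedFDeriv_apply hi)).aestronglyMeasurable
        (hmeas (fun x => T (F (S x))) (T.contDiff.comp (hF.comp S.contDiff)))
        (hmeas (fun x => D (f (E x))) (D.contDiff.comp (hf.comp E.contDiff)))
    _ ≤ _ := add_le_add le_rfl (by
      rw [hTFS, hthird, hsub]
      exact eLpNorm_iteratedFDeriv_clm_comp_comp_le (by linarith) hdom (hg.sub hf) hi E D)

lemma exists_clm_comp_comp_clm_eq_and_lintegral_lt_top {X Y : Type*} [NormedAddCommGroup X]
    [NormedSpace ℝ X] [MeasurableSpace X] [OpensMeasurableSpace X] [NormedAddCommGroup Y]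
    [NormedSpace ℝ Y] {p q : ℝ} (hp : 0 < p) (hq : 0 ≤ q) {ν : Measure X}
    (hν : MemLp (polyWeight p q) (ENNReal.ofReal p) ν) {k : ℕ} {F : X → Y}
    (hF : ContDiff ℝ k F) {c : ℕ → ℝ}
    (hFc : ∀ i ≤ k, ∀ x, ‖iteratedFDeriv ℝ i F x‖ ≤ c i * polyWeight p q x)
    (S : X →L[ℝ] X) (T : Y →L[ℝ] Y) [FiniteDimensional ℝ (LinearMap.range (S : X →ₗ[ℝ] X))]
    [FiniteDimensional ℝ (LinearMap.range (T : Y →ₗ[ℝ] Y))] :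
    ∃ (N N' : ℕ) (E : X →L[ℝ] (Fin N → ℝ)) (D : (Fin N' → ℝ) →L[ℝ] Y)
      (g : (Fin N → ℝ) → (Fin N' → ℝ)), ContDiff ℝ k g ∧ (∀ x, D (g (E x)) = T (F (S x))) ∧
      ∀ i ≤ k, ∫⁻ y, ‖iteratedFDeriv ℝ i g y‖ₑ ^ p ∂(ν.map E) < ⊤ := by
  obtain ⟨N, E, L, hLE⟩ := S.exists_comp_eq_of_finiteDimensional_range
  obtain ⟨N', P, D, hDP⟩ := T.exists_comp_eq_of_finiteDimensional_range
  refine ⟨N, N', E, D, fun v => P (F (L v)), P.contDiff.comp (hF.comp L.contDiff),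
    fun x => by simp only [hLE, hDP], fun i hik => ?_⟩
  have hi : (i : WithTop ℕ∞) ≤ k := by exact_mod_cast hik
  exact lintegral_enorm_rpow_lt_top_of_le_polyWeight hp (memLp_polyWeight_map_clm hp.le hq hν E)
    ((P.contDiff.comp (hF.comp L.contDiff)).continuous_iteratedFDeriv hi).aestronglyMeasurable
    (norm_iteratedFDeriv_clm_comp_comp_le_polyWeight hp.le hq hF hi (hFc i hik) le_rfl le_rfl)

theorem stmt_14_general {X Y : Type*} [NormedAddCommGroup X] [NormedSpace ℝ X]
    [TopologicalSpace.SeparableSpace X]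
    [NormedAddCommGroup Y] [NormedSpace ℝ Y]
    [MeasurableSpace X] [BorelSpace X]
    (S : ℕ → X →L[ℝ] X) (T : ℕ → Y →L[ℝ] Y) (lam : ℝ)
    (hSfr : ∀ d, FiniteDimensional ℝ (LinearMap.range (S d : X →ₗ[ℝ] X)))
    (hTfr : ∀ m, FiniteDimensional ℝ (LinearMap.range (T m : Y →ₗ[ℝ] Y)))
    (hS : ∀ x : X, Tendsto (fun d => S d x) atTop (𝓝 x))
    (hT : ∀ y : Y, Tendsto (fun m => T m y) atTop (𝓝 y))
    (hSb : ∀ d, ‖S d‖ ≤ lam) (hTb : ∀ m, ‖T m‖ ≤ lam)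
    (k : ℕ) (p q : ℝ) (hp : 1 ≤ p) (hq : 0 ≤ q)
    (μ : Measure (X × (Fin k → X))) [IsFiniteMeasure μ]
    (hμ : ∫⁻ z, ENNReal.ofReal (1 + ‖z.1‖ ^ q) *
        ∏ j, (1 + (‖z.2 j‖₊ : ℝ≥0∞) ^ p) ∂μ < ⊤)
    (C : ℕ → ℝ)
    (hRNdom : ∀ i, 1 ≤ i → ∀ hik : i ≤ k, ∀ A : Set X, MeasurableSet A →
      ∫⁻ z in Prod.fst ⁻¹' A, ∏ r, (‖z.2 r‖₊ : ℝ≥0∞) ^ p ∂(marginalUpTo μ i hik) ≤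
        ENNReal.ofReal (C i) * (μ.map Prod.fst) A)
    (𝒩 : (N N' : ℕ) → Set ((Fin N → ℝ) → (Fin N' → ℝ)))
    (h𝒩smooth : ∀ N N', ∀ f ∈ 𝒩 N N', ContDiff ℝ k f)
    (h𝒩dense : ∀ (N N' : ℕ) (ν : Measure (Fin N → ℝ)), IsFiniteMeasure ν →
      ∀ g : (Fin N → ℝ) → (Fin N' → ℝ), ContDiff ℝ k g →
      (∀ i ≤ k, ∫⁻ y, (‖iteratedFDeriv ℝ i g y‖₊ : ℝ≥0∞) ^ p ∂ν < ⊤) →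
      ∀ ε : ℝ, 0 < ε → ∃ f ∈ 𝒩 N N', ∀ i ≤ k,
        ∫⁻ y, (‖iteratedFDeriv ℝ i g y - iteratedFDeriv ℝ i f y‖₊ : ℝ≥0∞) ^ p ∂ν <
          ENNReal.ofReal (ε ^ p))
    (F : X → Y) (hF : ContDiff ℝ k F)
    (CF : ℝ)
    (hgrowth : ∀ i ≤ k, ∀ x : X, ‖iteratedFDeriv ℝ i F x‖ ^ p ≤ CF * (1 + ‖x‖ ^ q))
    (ε : ℝ) (hε : 0 < ε) :
    ∃ (N N' : ℕ) (E : X →L[ℝ] (Fin N → ℝ)) (D : (Fin N' → ℝ) →L[ℝ] Y)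
      (f : (Fin N → ℝ) → (Fin N' → ℝ)), f ∈ 𝒩 N N' ∧
      ∀ i, ∀ hik : i ≤ k,
        ∫⁻ z,
            (‖iteratedFDeriv ℝ i F z.1 z.2 -
                iteratedFDeriv ℝ i (fun x : X => D (f (E x))) z.1 z.2‖₊ : ℝ≥0∞) ^ p
          ∂(marginalUpTo μ i hik) < ENNReal.ofReal (ε ^ p) := by
  have := UniformSpace.secondCountable_of_separable X
  have hp0 : 0 < p := by linarith
  have hFc (i : ℕ) (hik : i ≤ k) (x : X) :
      ‖iteratedFDeriv ℝ i F x‖ ≤ CF ^ p⁻¹ * polyWeight p q x :=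
    norm_le_mul_polyWeight_of_rpow_le hp0 (hgrowth i hik x)
  have hε3 : 0 < ENNReal.ofReal ε / 3 := by simpa using hε
  obtain ⟨m, hm⟩ := exists_forall_le_of_eventually fun i hik =>
    (tendsto_eLpNorm_iteratedFDeriv_sub_clm hp0 (memLp_jetWeight_marginalUpTo hp0 hμ i hik) hF
      (by exact_mod_cast hik) (hFc i hik) hT hTb).eventually_lt_const hε3
  obtain ⟨d, hd⟩ := exists_forall_le_of_eventually fun i hik =>
    (tendsto_eLpNorm_clm_iteratedFDeriv_sub_comp hp0 hq (memLp_jetWeight_marginalUpTo hp0 hμ i hik)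
      hF (by exact_mod_cast hik) (hFc i hik) (T m) hS hSb).eventually_lt_const hε3
  have := hSfr d
  have := hTfr m
  obtain ⟨N, N', E, D, g, hg, hDgE, hg_int⟩ := exists_clm_comp_comp_clm_eq_and_lintegral_lt_top
    hp0 hq (memLp_polyWeight_map_fst hp0 hμ) hF hFc (S d) (T m)
  obtain ⟨δ, hδ, hδK⟩ := exists_pos_forall_le_mul_ofReal_lt
    (K := fun i => ‖D‖ₑ * ‖E‖ₑ ^ i * (ENNReal.ofReal (C i) + 1) ^ p⁻¹)
    (fun i _ => by finiteness) hε3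
  obtain ⟨f, hf𝒩, hfg⟩ := h𝒩dense N N' _ inferInstance g hg hg_int δ hδ
  refine ⟨N, N', E, D, f, hf𝒩, fun i hik => (eLpNorm_ofReal_lt_ofReal_iff hp0 hε.le).1 ?_⟩
  calc _ ≤ _ := eLpNorm_iteratedFDeriv_sub_clm_comp_comp_le hp
        (setLIntegral_marginalUpTo_le hRNdom i hik) hF hg (h𝒩smooth N N' f hf𝒩)
        (by exact_mod_cast hik) (T m) (S d) E D hDgE
    _ < ENNReal.ofReal ε / 3 + ENNReal.ofReal ε / 3 + ENNReal.ofReal ε / 3 := by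
        gcongr
        exacts [hm i hik, hd i hik, lt_of_le_of_lt (by
          gcongr; exact ((eLpNorm_ofReal_lt_ofReal_iff hp0 hδ.le).2 (hfg i hik)).le) (hδK i hik)]
    _ = ENNReal.ofReal ε := ENNReal.add_thirds _

/-- universal approximation in the weighted Sobolev norm for maps of
polynomial growth: under the bounded approximation property for separable `X`, `Y`,
finiteness of `‖μ‖_{k,q,p}`, the Radon–Nikodym domination assumption, and a family of
finite-dimensional approximators with the Sobolev density property, every `C^k` map `F`
with `‖D^iF(x)‖^p ≤ C_F(1+‖x‖^q)` can be `ε`-approximated in `‖·‖_{W^{k,p}_{B,μ}}` by an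
encoder-decoder architecture `D ∘ f ∘ E` with `f ∈ 𝒩 N N'`. -/
theorem stmt_14 {X Y : Type*} [NormedAddCommGroup X] [NormedSpace ℝ X] [CompleteSpace X]
    [TopologicalSpace.SeparableSpace X]
    [NormedAddCommGroup Y] [NormedSpace ℝ Y] [CompleteSpace Y]
    [TopologicalSpace.SeparableSpace Y]
    [MeasurableSpace X] [BorelSpace X]
    (S : ℕ → X →L[ℝ] X) (T : ℕ → Y →L[ℝ] Y) (lam : ℝ)
    (hSfr : ∀ d, FiniteDimensional ℝ (LinearMap.range (S d : X →ₗ[ℝ] X)))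
    (hTfr : ∀ m, FiniteDimensional ℝ (LinearMap.range (T m : Y →ₗ[ℝ] Y)))
    (hS : ∀ x : X, Tendsto (fun d => S d x) atTop (𝓝 x))
    (hT : ∀ y : Y, Tendsto (fun m => T m y) atTop (𝓝 y))
    (hSb : ∀ d, ‖S d‖ ≤ lam) (hTb : ∀ m, ‖T m‖ ≤ lam)
    (k : ℕ) (p q : ℝ) (hp : 1 ≤ p) (hq : 0 ≤ q)
    (μ : Measure (X × (Fin k → X))) [IsFiniteMeasure μ]
    (hμ : ∫⁻ z, ENNReal.ofReal (1 + ‖z.1‖ ^ q) *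
        ∏ j, (1 + (‖z.2 j‖₊ : ℝ≥0∞) ^ p) ∂μ < ⊤)
    (C : ℕ → ℝ) (hCpos : ∀ i, 1 ≤ i → i ≤ k → 0 < C i)
    (hRNfin : ∀ i, 1 ≤ i → ∀ hik : i ≤ k,
      ∫⁻ z, ∏ r, (‖z.2 r‖₊ : ℝ≥0∞) ^ p ∂(marginalUpTo μ i hik) < ⊤)
    (hRNdom : ∀ i, 1 ≤ i → ∀ hik : i ≤ k, ∀ A : Set X, MeasurableSet A →
      ∫⁻ z in Prod.fst ⁻¹' A, ∏ r, (‖z.2 r‖₊ : ℝ≥0∞) ^ p ∂(marginalUpTo μ i hik) ≤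
        ENNReal.ofReal (C i) * (μ.map Prod.fst) A)
    (𝒩 : (N N' : ℕ) → Set ((Fin N → ℝ) → (Fin N' → ℝ)))
    (h𝒩smooth : ∀ N N', ∀ f ∈ 𝒩 N N', ContDiff ℝ k f)
    (h𝒩dense : ∀ (N N' : ℕ) (ν : Measure (Fin N → ℝ)), IsFiniteMeasure ν →
      ∀ g : (Fin N → ℝ) → (Fin N' → ℝ), ContDiff ℝ k g →
      (∀ i ≤ k, ∫⁻ y, (‖iteratedFDeriv ℝ i g y‖₊ : ℝ≥0∞) ^ p ∂ν < ⊤) →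
      ∀ ε : ℝ, 0 < ε → ∃ f ∈ 𝒩 N N', ∀ i ≤ k,
        ∫⁻ y, (‖iteratedFDeriv ℝ i g y - iteratedFDeriv ℝ i f y‖₊ : ℝ≥0∞) ^ p ∂ν <
          ENNReal.ofReal (ε ^ p))
    (F : X → Y) (hF : ContDiff ℝ k F)
    (CF : ℝ)
    (hgrowth : ∀ i ≤ k, ∀ x : X, ‖iteratedFDeriv ℝ i F x‖ ^ p ≤ CF * (1 + ‖x‖ ^ q))
    (ε : ℝ) (hε : 0 < ε) :
    ∃ (N N' : ℕ) (E : X →L[ℝ] (Fin N → ℝ)) (D : (Fin N' → ℝ) →L[ℝ] Y)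
      (f : (Fin N → ℝ) → (Fin N' → ℝ)), f ∈ 𝒩 N N' ∧
      ∀ i, ∀ hik : i ≤ k,
        ∫⁻ z,
            (‖iteratedFDeriv ℝ i F z.1 z.2 -
                iteratedFDeriv ℝ i (fun x : X => D (f (E x))) z.1 z.2‖₊ : ℝ≥0∞) ^ p
          ∂(marginalUpTo μ i hik) < ENNReal.ofReal (ε ^ p) :=
  stmt_14_general S T lam hSfr hTfr hS hT hSb hTb k p q hp hq μ hμ C hRNdom 𝒩 h𝒩smooth h𝒩dense F hF
    CF hgrowth ε hε
end
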